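/- Let G_n = F^{⊗n}, N = 2^n, and let v be a nonzero binary vector of length N whose first nonzero entry is in position i. Then for any odd-cardinality set S of distinct shift amounts in {0, 1, …, N−1}, w((v G_n) ∑_{l ∈ S} C_N^l) ≥ w(g_i), where g_i is the i-th row of G_n and w denotes Hamming weight. -/

import Mathlib

/-- `G_n = F^{⊗n}` for `F = [[1,0],[1,1]]` over `𝔽₂` (0-indexed). -/
def polarG (n : ℕ) : Matrix (Fin (2^n)) (Fin (2^n)) (ZMod 2) :=
  Matrix.of fun i j => if j.val &&& i.val = j.val then 1 else 0

/-- The `N×N` clockwise cyclic shift matrix by `j` places over `𝔽₂`. -/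
def cyc (N j : ℕ) : Matrix (Fin N) (Fin N) (ZMod 2) :=
  Matrix.of fun i k => if (i.val + j) % N = k.val then 1 else 0

/-- Hamming weight of a binary vector. -/
def wt {N : ℕ} (v : Fin N → ZMod 2) : ℕ :=
  (Finset.univ.filter fun j => v j ≠ 0).card

/-!
Read a row vector as the first row of a polynomial in the cyclic shift `C`, and put `Y = C + 1`;
then `Y ^ N = C ^ N + 1 = 0`. By Lucas' theorem the first row of `Y ^ j` is `g_j`, so `v G_n` is
the first row of `p(Y)` with `p = ∑ v_j X ^ j`, and `∑_{l ∈ S} C ^ l = q(Y)` with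
`q = ∑_{l ∈ S} (X + 1) ^ l`. Hence `(v G_n) ∑_{l ∈ S} C ^ l = w G_n`, where `w` lists the first `N`
coefficients of `p q`; as `q(0) = |S| = 1` in `𝔽₂`, the first nonzero entry of `w` is again at `i`.

It remains to bound `wt (w G_n)` for such `w`, by induction on `n` through the Plotkin structure
`G_{n+1} = [[G_n, 0], [G_n, G_n]]`: `w G_{n+1} = ((w₀ + w₁) G_n | w₁ G_n)`. If `i` is in the first
half, the weight is at least `wt (w₀ G_n) ≥ wt g_i`; otherwise `w₀ = 0` and it is `2 wt (w₁ G_n)`,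
while `g_i` is a row `g_{i'}` of `G_n` written twice.
-/

open Matrix Finset Polynomial

theorem hammingNorm_add_le {ι β : Type*} [Fintype ι] [AddZeroClass β] [DecidableEq β]
    (x y : ι → β) : hammingNorm (x + y) ≤ hammingNorm x + hammingNorm y := by
  classical
  unfold hammingNorm
  refine (card_le_card fun i hi => ?_).trans (card_union_le _ _)
  simp only [mem_filter, mem_union, mem_univ, true_and, Pi.add_apply] at hi ⊢
  by_contra! h
  exact hi (by rw [h.1, h.2, add_zero])

theorem wt_eq_hammingNorm {N : ℕ} (v : Fin N → ZMod 2) : wt v = hammingNorm v := rfl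

theorem Nat.and_eq_left_iff_div_mod (a b m : ℕ) :
    a &&& b = a ↔ a / 2 ^ m &&& b / 2 ^ m = a / 2 ^ m ∧ a % 2 ^ m &&& b % 2 ^ m = a % 2 ^ m := by
  rw [← Nat.and_div_two_pow, ← Nat.and_mod_two_pow]
  refine ⟨fun h => by rw [h]; exact ⟨rfl, rfl⟩, fun ⟨hd, hm⟩ => ?_⟩
  rw [← Nat.div_add_mod (a &&& b) (2 ^ m), hd, hm, Nat.div_add_mod]

theorem Nat.cast_choose_zmod_two (a b : ℕ) :
    (a.choose b : ZMod 2) = if b &&& a = b then 1 else 0 := by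
  induction a using Nat.strong_induction_on generalizing b with
  | _ a ih =>
  rcases Nat.eq_zero_or_pos a with rfl | ha
  · rcases Nat.eq_zero_or_pos b with rfl | hb
    · simp
    · rw [Nat.choose_eq_zero_of_lt hb, if_neg (by simp; omega), Nat.cast_zero]
  have lucas := Choose.choose_modEq_choose_mod_mul_choose_div_nat (p := 2) (n := a) (k := b)
  rw [(ZMod.natCast_eq_natCast_iff _ _ _).mpr lucas, Nat.cast_mul, ih (a / 2) (by omega),
    if_congr (Nat.and_eq_left_iff_div_mod b a 1) rfl rfl, pow_one]
  rcases Nat.mod_two_eq_zero_or_one a with h | h <;>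
    rcases Nat.mod_two_eq_zero_or_one b with h' | h' <;> simp [h, h']

namespace Polynomial

theorem aeval_eq_sum_range_of_pow_eq_zero {R S : Type*} [CommSemiring R] [Semiring S]
    [Algebra R S] {x : S} {N : ℕ} (hx : x ^ N = 0) (p : R[X]) :
    aeval x p = ∑ i ∈ range N, p.coeff i • x ^ i := by
  rw [aeval_eq_sum_range' (n := max N (p.natDegree + 1)) (by omega)]
  refine (sum_subset (range_subset_range.2 (le_max_left _ _)) fun i _ hi => ?_).symm
  rw [pow_eq_zero_of_le (by simpa using hi) hx, smul_zero]

variable {R : Type*} [Semiring R] {p : R[X]} {i : ℕ}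

theorem coeff_mul_eq_zero_of_forall_coeff_eq_zero (hp : ∀ j < i, p.coeff j = 0) (q : R[X])
    {j : ℕ} (hj : j < i) : (p * q).coeff j = 0 :=
  X_pow_dvd_iff.1 (dvd_mul_of_dvd_left (X_pow_dvd_iff.2 hp) q) j hj

theorem coeff_mul_of_forall_coeff_eq_zero (hp : ∀ j < i, p.coeff j = 0) (q : R[X]) :
    (p * q).coeff i = p.coeff i * q.coeff 0 := by
  obtain ⟨r, rfl⟩ := X_pow_dvd_iff.2 hp
  rw [mul_assoc, coeff_X_pow_mul', coeff_X_pow_mul', if_pos le_rfl, if_pos le_rfl, Nat.sub_self,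
    mul_coeff_zero]

end Polynomial

namespace Fin

def halvesEquiv (n : ℕ) : Fin (2 ^ n) ⊕ Fin (2 ^ n) ≃ Fin (2 ^ (n + 1)) :=
  finSumFinEquiv.trans (finCongr (by rw [pow_succ, mul_two]))

def lowHalf (n : ℕ) (j : Fin (2 ^ n)) : Fin (2 ^ (n + 1)) := halvesEquiv n (.inl j)

def highHalf (n : ℕ) (j : Fin (2 ^ n)) : Fin (2 ^ (n + 1)) := halvesEquiv n (.inr j)

variable {n : ℕ}

@[simp] theorem val_lowHalf (j : Fin (2 ^ n)) : (lowHalf n j).val = j.val := rfl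

@[simp] theorem val_highHalf (j : Fin (2 ^ n)) : (highHalf n j).val = 2 ^ n + j.val := rfl

theorem lowHalf_strictMono : StrictMono (lowHalf n) := fun _ _ h => h

theorem highHalf_strictMono : StrictMono (highHalf n) := fun _ _ h => Nat.add_lt_add_left h _

theorem lowHalf_lt_highHalf (j k : Fin (2 ^ n)) : lowHalf n j < highHalf n k :=
  Fin.lt_def.2 (by rw [val_lowHalf, val_highHalf]; omega)

theorem lowHalf_or_highHalf (i : Fin (2 ^ (n + 1))) :
    (∃ j, i = lowHalf n j) ∨ ∃ j, i = highHalf n j := by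
  obtain ⟨j | j, rfl⟩ := (halvesEquiv n).surjective i
  exacts [.inl ⟨j, rfl⟩, .inr ⟨j, rfl⟩]

theorem sum_univ_halves {M : Type*} [AddCommMonoid M] (f : Fin (2 ^ (n + 1)) → M) :
    ∑ i, f i = ∑ j, f (lowHalf n j) + ∑ j, f (highHalf n j) := by
  rw [← (halvesEquiv n).sum_comp, Fintype.sum_sum_type]
  rfl

end Fin

open Fin

section Plotkin

variable {n : ℕ}

theorem wt_eq_wt_lowHalf_add_wt_highHalf (c : Fin (2 ^ (n + 1)) → ZMod 2) :
    wt c = wt (c ∘ lowHalf n) + wt (c ∘ highHalf n) := by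
  simp only [wt, card_filter, sum_univ_halves, Function.comp_apply]

theorem polarG_lowHalf_lowHalf (j k : Fin (2 ^ n)) :
    polarG (n + 1) (lowHalf n j) (lowHalf n k) = polarG n j k := rfl

theorem polarG_lowHalf_highHalf (j k : Fin (2 ^ n)) :
    polarG (n + 1) (lowHalf n j) (highHalf n k) = 0 := by
  have : (2 ^ n + k.val) &&& j.val < 2 ^ n := Nat.and_lt_two_pow _ j.isLt
  change (if (2 ^ n + k.val) &&& j.val = 2 ^ n + k.val then (1 : ZMod 2) else 0) = 0
  rw [if_neg (by omega)]

theorem polarG_highHalf_lowHalf (j k : Fin (2 ^ n)) :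
    polarG (n + 1) (highHalf n j) (lowHalf n k) = polarG n j k := by
  simp only [polarG, of_apply, val_highHalf]
  refine if_congr ?_ rfl rfl
  rw [Nat.and_eq_left_iff_div_mod _ _ n]
  simp [Nat.div_eq_of_lt, Nat.mod_eq_of_lt]

theorem polarG_highHalf_highHalf (j k : Fin (2 ^ n)) :
    polarG (n + 1) (highHalf n j) (highHalf n k) = polarG n j k := by
  simp only [polarG, of_apply, val_highHalf]
  refine if_congr ?_ rfl rfl
  rw [Nat.and_eq_left_iff_div_mod _ _ n]
  simp [Nat.div_eq_of_lt, Nat.mod_eq_of_lt]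

theorem vecMul_polarG_succ_comp_lowHalf (v : Fin (2 ^ (n + 1)) → ZMod 2) :
    vecMul v (polarG (n + 1)) ∘ lowHalf n =
      vecMul (v ∘ lowHalf n + v ∘ highHalf n) (polarG n) := by
  ext k
  simp only [Function.comp_apply, vecMul, dotProduct, sum_univ_halves, polarG_lowHalf_lowHalf,
    polarG_highHalf_lowHalf, Pi.add_apply, add_mul, sum_add_distrib]

theorem vecMul_polarG_succ_comp_highHalf (v : Fin (2 ^ (n + 1)) → ZMod 2) :
    vecMul v (polarG (n + 1)) ∘ highHalf n = vecMul (v ∘ highHalf n) (polarG n) := by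
  ext k
  simp only [Function.comp_apply, vecMul, dotProduct, sum_univ_halves, polarG_lowHalf_highHalf,
    polarG_highHalf_highHalf, mul_zero, sum_const_zero, zero_add]

theorem wt_vecMul_polarG_succ (v : Fin (2 ^ (n + 1)) → ZMod 2) :
    wt (vecMul v (polarG (n + 1))) =
      wt (vecMul (v ∘ lowHalf n + v ∘ highHalf n) (polarG n)) +
        wt (vecMul (v ∘ highHalf n) (polarG n)) := by
  rw [wt_eq_wt_lowHalf_add_wt_highHalf, vecMul_polarG_succ_comp_lowHalf,
    vecMul_polarG_succ_comp_highHalf]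

theorem wt_polarG_succ_lowHalf (i : Fin (2 ^ n)) :
    wt (polarG (n + 1) (lowHalf n i)) = wt (polarG n i) := by
  have hlow : polarG (n + 1) (lowHalf n i) ∘ lowHalf n = polarG n i := rfl
  have hhigh : polarG (n + 1) (lowHalf n i) ∘ highHalf n = 0 :=
    funext (polarG_lowHalf_highHalf i)
  rw [wt_eq_wt_lowHalf_add_wt_highHalf, hlow, hhigh, wt_eq_hammingNorm 0, hammingNorm_zero,
    add_zero]

theorem wt_polarG_succ_highHalf (i : Fin (2 ^ n)) :
    wt (polarG (n + 1) (highHalf n i)) = 2 * wt (polarG n i) := by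
  have hlow : polarG (n + 1) (highHalf n i) ∘ lowHalf n = polarG n i :=
    funext (polarG_highHalf_lowHalf i)
  have hhigh : polarG (n + 1) (highHalf n i) ∘ highHalf n = polarG n i :=
    funext (polarG_highHalf_highHalf i)
  rw [wt_eq_wt_lowHalf_add_wt_highHalf, hlow, hhigh, two_mul]

end Plotkin

theorem polarG_zero : polarG 0 = 1 := by
  ext i j
  obtain rfl : i = j := Subsingleton.elim (α := Fin 1) i j
  simp [polarG]

theorem wt_polarG_le_wt_vecMul (n : ℕ) (v : Fin (2 ^ n) → ZMod 2) (i : Fin (2 ^ n))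
    (hvi : v i ≠ 0) (hfirst : ∀ j < i, v j = 0) : wt (polarG n i) ≤ wt (vecMul v (polarG n)) := by
  induction n with
  | zero =>
    have hv : v ≠ 0 := fun h => hvi (congrFun h i)
    calc wt (polarG 0 i) ≤ Fintype.card (Fin (2 ^ 0)) := hammingNorm_le_card_fintype
      _ = 1 := rfl
      _ ≤ wt (vecMul v (polarG 0)) := by
        rw [polarG_zero, vecMul_one]
        exact hammingNorm_pos_iff.2 hv
  | succ n ih =>
    rw [wt_vecMul_polarG_succ]
    obtain ⟨i, rfl⟩ | ⟨i, rfl⟩ := lowHalf_or_highHalf i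
    · have hlow : wt (polarG n i) ≤ wt (vecMul (v ∘ lowHalf n) (polarG n)) :=
        ih _ i hvi fun j hj => hfirst _ (lowHalf_strictMono hj)
      calc wt (polarG (n + 1) (lowHalf n i)) = wt (polarG n i) := wt_polarG_succ_lowHalf i
        _ ≤ wt (vecMul (v ∘ lowHalf n) (polarG n)) := hlow
        _ = wt (vecMul (v ∘ lowHalf n + v ∘ highHalf n) (polarG n) +
              vecMul (v ∘ highHalf n) (polarG n)) := by
          rw [← add_vecMul, add_assoc, CharTwo.add_self_eq_zero, add_zero]
        _ ≤ _ := hammingNorm_add_le _ _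
    · have hlow : v ∘ lowHalf n = 0 := funext fun j => hfirst _ (lowHalf_lt_highHalf j i)
      have hhigh : wt (polarG n i) ≤ wt (vecMul (v ∘ highHalf n) (polarG n)) :=
        ih _ i hvi fun j hj => hfirst _ (highHalf_strictMono hj)
      rw [wt_polarG_succ_highHalf, hlow, zero_add, two_mul]
      exact Nat.add_le_add hhigh hhigh

section Shift

variable (N : ℕ)

theorem cyc_zero : cyc N 0 = 1 := by
  ext i k
  simp [cyc, one_apply, Nat.mod_eq_of_lt i.isLt, Fin.ext_iff]

theorem cyc_add (a b : ℕ) : cyc N (a + b) = cyc N a * cyc N b := by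
  ext i k
  rw [mul_apply, sum_eq_single ⟨(i + a) % N, Nat.mod_lt _ i.pos⟩]
  · simp [cyc, Nat.add_assoc]
  · intro j _ hj
    simp only [cyc, of_apply, ite_mul, one_mul, zero_mul, ite_eq_right_iff]
    exact fun h => absurd (Fin.ext h.symm) hj
  · simp

theorem cyc_eq_pow (l : ℕ) : cyc N l = cyc N 1 ^ l := by
  induction l with
  | zero => rw [cyc_zero, pow_zero]
  | succ l ih => rw [cyc_add, ih, pow_succ]

theorem cyc_self : cyc N N = 1 := by
  ext i k
  simp [cyc, one_apply, Nat.mod_eq_of_lt i.isLt, Fin.ext_iff]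

theorem aeval_cyc_one_apply_zero [NeZero N] (p : (ZMod 2)[X]) (hp : p.natDegree < N)
    (k : Fin N) : aeval (cyc N 1) p 0 k = p.coeff k := by
  rw [aeval_eq_sum_range' hp, Matrix.sum_apply]
  simp only [Matrix.smul_apply, ← cyc_eq_pow]
  simp only [cyc, of_apply]
  rw [sum_eq_single k.val]
  · simp [Nat.mod_eq_of_lt k.isLt]
  · intro m hm hmk
    simp [Nat.mod_eq_of_lt (mem_range.1 hm), hmk]
  · simp [k.isLt]

end Shift

section CycAddOne

variable {n : ℕ}

variable (n) in
def cycAddOne : Matrix (Fin (2 ^ n)) (Fin (2 ^ n)) (ZMod 2) := cyc (2 ^ n) 1 + 1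

theorem cycAddOne_pow_two_pow : cycAddOne n ^ 2 ^ n = 0 := by
  rw [cycAddOne, add_pow_char_pow_of_commute 2 n (Commute.one_right _), one_pow, ← cyc_eq_pow,
    cyc_self, CharTwo.add_self_eq_zero]

theorem cyc_eq_aeval_cycAddOne (l : ℕ) :
    cyc (2 ^ n) l = aeval (cycAddOne n) ((X + 1 : (ZMod 2)[X]) ^ l) := by
  rw [map_pow, map_add, aeval_X, map_one, cycAddOne, add_assoc, CharTwo.add_self_eq_zero,
    add_zero, cyc_eq_pow]

theorem cycAddOne_pow_apply_zero (j k : Fin (2 ^ n)) :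
    (cycAddOne n ^ (j : ℕ)) 0 k = polarG n j k := by
  have hdeg : ((X + 1 : (ZMod 2)[X]) ^ (j : ℕ)).natDegree < 2 ^ n := by
    have hX : (X + 1 : (ZMod 2)[X]).natDegree = 1 := natDegree_X_add_C 1
    simp [hX]
  have hY : cycAddOne n = aeval (cyc (2 ^ n) 1) (X + 1 : (ZMod 2)[X]) := by simp [cycAddOne]
  rw [hY, ← map_pow, aeval_cyc_one_apply_zero _ _ hdeg, coeff_X_add_one_pow,
    Nat.cast_choose_zmod_two]
  rfl

theorem aeval_cycAddOne_apply_zero (p : (ZMod 2)[X]) :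
    aeval (cycAddOne n) p 0 = vecMul (toFn (2 ^ n) p) (polarG n) := by
  ext k
  rw [aeval_eq_sum_range_of_pow_eq_zero cycAddOne_pow_two_pow, ← Fin.sum_univ_eq_sum_range,
    Matrix.sum_apply]
  simp [vecMul, dotProduct, cycAddOne_pow_apply_zero, toFn]

theorem vecMul_polarG_eq_aeval_apply_zero (v : Fin (2 ^ n) → ZMod 2) :
    vecMul v (polarG n) = aeval (cycAddOne n) (ofFn (2 ^ n) v) 0 := by
  rw [aeval_cycAddOne_apply_zero, toFn_comp_ofFn_eq_id]

theorem sum_cyc_eq_aeval (S : Finset ℕ) :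
    ∑ l ∈ S, cyc (2 ^ n) l = aeval (cycAddOne n) (∑ l ∈ S, (X + 1 : (ZMod 2)[X]) ^ l) := by
  simp only [map_sum, cyc_eq_aeval_cycAddOne]

end CycAddOne

theorem coeff_zero_sum_X_add_one_pow (S : Finset ℕ) (hS : Odd S.card) :
    (∑ l ∈ S, (X + 1 : (ZMod 2)[X]) ^ l).coeff 0 = 1 := by
  rw [finsetSum_coeff]
  simp only [coeff_X_add_one_pow, Nat.choose_zero_right, Nat.cast_one, Finset.sum_const, nsmul_one]
  exact ZMod.natCast_eq_one_iff_odd.2 hS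

theorem stmt9_general (n : ℕ) (v : Fin (2^n) → ZMod 2) (i : Fin (2^n))
    (hvi : v i ≠ 0) (hfirst : ∀ j : Fin (2^n), j < i → v j = 0)
    (S : Finset ℕ) (hodd : Odd S.card) :
    wt (Matrix.vecMul (Matrix.vecMul v (polarG n)) (∑ l ∈ S, cyc (2^n) l)) ≥
      wt (polarG n i) := by
  set p := ofFn (2 ^ n) v
  set q := ∑ l ∈ S, (X + 1 : (ZMod 2)[X]) ^ l
  have hp : ∀ j < (i : ℕ), p.coeff j = 0 := fun j hj => by
    rw [ofFn_coeff_eq_val_of_lt v (hj.trans i.isLt)]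
    exact hfirst _ hj
  have hprod : vecMul (vecMul v (polarG n)) (∑ l ∈ S, cyc (2 ^ n) l) =
      vecMul (toFn (2 ^ n) (p * q)) (polarG n) := by
    rw [vecMul_polarG_eq_aeval_apply_zero, sum_cyc_eq_aeval, ← mul_apply_eq_vecMul, ← map_mul,
      aeval_cycAddOne_apply_zero]
  have hpqi : (p * q).coeff i = v i := by
    rw [coeff_mul_of_forall_coeff_eq_zero hp, coeff_zero_sum_X_add_one_pow S hodd, mul_one,
      ofFn_coeff_eq_val_of_lt v i.isLt]
  rw [hprod, ge_iff_le]
  exact wt_polarG_le_wt_vecMul n _ i (by rwa [← hpqi] at hvi) fun j hj =>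
    coeff_mul_eq_zero_of_forall_coeff_eq_zero hp q hj

/-- If the first nonzero entry of `v` is in position `i`, then for any odd-cardinality
set `S` of distinct shift amounts in `{0,…,N−1}`,
`w((v G_n) ∑_{l∈S} C_N^l) ≥ w(g_i)`. -/
theorem stmt9 (n : ℕ) (v : Fin (2^n) → ZMod 2) (i : Fin (2^n))
    (hvi : v i ≠ 0) (hfirst : ∀ j : Fin (2^n), j < i → v j = 0)
    (S : Finset ℕ) (hS : ∀ s ∈ S, s ≤ 2^n - 1) (hodd : Odd S.card) :
    wt (Matrix.vecMul (Matrix.vecMul v (polarG n)) (∑ l ∈ S, cyc (2^n) l)) ≥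
      wt (polarG n i) :=
  stmt9_general n v i hvi hfirst S hodd
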